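/- arXiv:1105.0852 — 2 statements merged into one kernel-verified Lean document; each statement's English description precedes it below -/
import Mathlib

section
/- Let ℛ^{⊥_D} = {x ∈ ℝ^I : xᵀDr = 0 for all r ∈ ℛ}, let 𝒞'' = 𝒯 ∩ ℛ^{⊥_D}, and set S = D(I_I − P^D_ℛ). Then the columns of P^D_{ℛ^{⊥_D}}E form a basis of 𝒞'', the projections decompose as P^D_𝒯 = P^D_ℛ + P^D_{𝒞''}, the K×K matrix EᵀSE is invertible, and D P^D_{𝒞''} = SE(EᵀSE)⁻¹EᵀS. -/
open Matrix BigOperators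

noncomputable section

/-- Cells `(j,k)` of a `(J+1) × (K+1)` contingency table. -/
abbrev Cell (J K : ℕ) := Fin (J + 1) × Fin (K + 1)

/-- Standard unit vector `e_{jk}` in `ℝ^I`. -/
def eV {J K : ℕ} (c : Cell J K) : Cell J K → ℝ := Pi.single c 1

/-- Row-sum vector `e_{j+} = Σ_k e_{jk}`. -/
def eRow {J K : ℕ} (j : Fin (J + 1)) : Cell J K → ℝ := ∑ k : Fin (K + 1), eV (j, k)

/-- Column-sum vector `e_{+k} = Σ_j e_{jk}`. -/
def eCol {J K : ℕ} (k : Fin (K + 1)) : Cell J K → ℝ := ∑ j : Fin (J + 1), eV (j, k)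

/-- The all-ones vector `e_{++}`. -/
def eAll (J K : ℕ) : Cell J K → ℝ := ∑ j : Fin (J + 1), ∑ k : Fin (K + 1), eV (j, k)

/-- The row space `ℛ = span{e_{0+},…,e_{J+}}`. -/
def rowSpace (J K : ℕ) : Submodule ℝ (Cell J K → ℝ) :=
  Submodule.span ℝ (Set.range (eRow (J := J) (K := K)))

/-- The column space `𝒞 = span{e_{+0},…,e_{+K}}`. -/
def colSpace (J K : ℕ) : Submodule ℝ (Cell J K → ℝ) :=
  Submodule.span ℝ (Set.range (eCol (J := J) (K := K)))

/-- The diagonal space `𝒟 = span{e_{++}}`. -/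
def diagSpace (J K : ℕ) : Submodule ℝ (Cell J K → ℝ) :=
  Submodule.span ℝ {eAll J K}

/-- The marginal space `𝒯 = ℛ + 𝒞`. -/
def margSpace (J K : ℕ) : Submodule ℝ (Cell J K → ℝ) := rowSpace J K ⊔ colSpace J K

/-- `P` is the `D`-orthogonal projection matrix onto the subspace `S`:
`P x ∈ S` and `x - P x` is `D`-orthogonal to `S`, for every `x`. -/
def IsProjD {J K : ℕ} (D : Matrix (Cell J K) (Cell J K) ℝ) (S : Submodule ℝ (Cell J K → ℝ))
    (P : Matrix (Cell J K) (Cell J K) ℝ) : Prop :=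
  ∀ x, P.mulVec x ∈ S ∧ ∀ s ∈ S, (x - P.mulVec x) ⬝ᵥ D.mulVec s = 0

/-- The `D`-orthogonal complement of a subspace `S`. -/
def perpD {J K : ℕ} (D : Matrix (Cell J K) (Cell J K) ℝ) (S : Submodule ℝ (Cell J K → ℝ)) :
    Submodule ℝ (Cell J K → ℝ) where
  carrier := {x | ∀ t ∈ S, x ⬝ᵥ D.mulVec t = 0}
  add_mem' := by
    intro a b ha hb t ht
    simp only [Set.mem_setOf_eq] at *
    simp [add_dotProduct, ha t ht, hb t ht]
  zero_mem' := by
    intro t ht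
    simp
  smul_mem' := by
    intro c a ha t ht
    simp only [Set.mem_setOf_eq] at *
    simp [smul_dotProduct, ha t ht]

/-- The vector `c_{jk} = e_{jk} + e_{00} - e_{j0} - e_{0k}` (for `1 ≤ j`, `1 ≤ k`). -/
def cVec {J K : ℕ} (j : Fin J) (k : Fin K) : Cell J K → ℝ :=
  eV (j.succ, k.succ) + eV (0, 0) - eV (j.succ, 0) - eV (0, k.succ)

/-- The `I × (JK)` matrix `C` with columns `c_{jk}`. -/
def Cmat (J K : ℕ) : Matrix (Cell J K) (Fin J × Fin K) ℝ :=
  fun i jk => cVec jk.1 jk.2 i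

/-- The vector `b_k = e_{0k} - e_{00}` (for `1 ≤ k`). -/
def bVec {J K : ℕ} (k : Fin K) : Cell J K → ℝ :=
  eV ((0 : Fin (J + 1)), k.succ) - eV (0, 0)

/-- The `I × K` matrix `B` with columns `b_k`. -/
def Bmat (J K : ℕ) : Matrix (Cell J K) (Fin K) ℝ :=
  fun i k => bVec k i

/-- The `I × K` matrix `E` with columns `e_{+1},…,e_{+K}`. -/
def Emat (J K : ℕ) : Matrix (Cell J K) (Fin K) ℝ :=
  fun i k => eCol k.succ i

/-- Column space of a matrix. -/
def colSpan {m n : Type*} [Fintype n] (A : Matrix m n ℝ) : Submodule ℝ (m → ℝ) :=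
  Submodule.span ℝ (Set.range fun j => fun i => A i j)

/-- The reduced `(JK) × L` covariate matrix `Z°` with rows `z_{jk}ᵀ`, `j,k ≥ 1`. -/
def Zred {J K : ℕ} {L : Type*} (Z : Matrix (Cell J K) L ℝ) : Matrix (Fin J × Fin K) L ℝ :=
  fun jk => Z (jk.1.succ, jk.2.succ)

/-- The model space `ℋ = 𝒯 + col(Z)` of the log-linear model
`η_{jk} = α + ρ_j + γ_k + z_{jk}ᵀ θ`. -/
def modelSpace {J K : ℕ} {L : Type*} [Fintype L] (Z : Matrix (Cell J K) L ℝ) :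
    Submodule ℝ (Cell J K → ℝ) :=
  margSpace J K ⊔ colSpan Z

end

/-!
`I − P^D_ℛ` is the `D`-orthogonal projection onto `ℛ^{⊥_D}` and kills `ℛ`, so it maps
`𝒯 = ℛ + col(E)` onto `𝒯 ∩ ℛ^{⊥_D} = 𝒞''`, and this image is `col((I − P^D_ℛ)E)`. It is injective
on `col(E)`: a vector of `ℛ` is constant along each row, while `E a` vanishes in column `0` and
equals `a k` in column `k + 1`. Splitting `𝒯 = ℛ ⊕ 𝒞''` `D`-orthogonally gives
`P^D_𝒯 = P^D_ℛ + P^D_{𝒞''}`, and the last formula is the Gram formula `X(XᵀDX)⁻¹XᵀD` for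
`X = (I − P^D_ℛ)E`, simplified with `(I − P^D_ℛ)ᵀD = D(I − P^D_ℛ)` and idempotence.
-/

lemma Matrix.IsSymm.dotProduct_mulVec_comm {n : Type*} [Fintype n] {D : Matrix n n ℝ}
    (hD : D.IsSymm) (x y : n → ℝ) : x ⬝ᵥ D *ᵥ y = y ⬝ᵥ D *ᵥ x := by
  rw [dotProduct_mulVec, ← mulVec_transpose, hD.eq, dotProduct_comm]

lemma Matrix.PosDef.eq_zero_of_dotProduct_mulVec_self {n : Type*} [Fintype n]
    {D : Matrix n n ℝ} (hD : D.PosDef) {x : n → ℝ} (hx : x ⬝ᵥ D *ᵥ x = 0) : x = 0 := by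
  by_contra hne
  simpa [hx] using hD.dotProduct_mulVec_pos hne

lemma Matrix.PosDef.transpose_mul_mul_same {m n : Type*} [Fintype m] [Fintype n]
    {D : Matrix m m ℝ} (hD : D.PosDef) {X : Matrix m n ℝ} (hX : LinearIndependent ℝ X.col) :
    (Xᵀ * D * X).PosDef := by
  simpa [conjTranspose_eq_transpose_of_trivial] using
    hD.conjTranspose_mul_mul_same (mulVec_injective_iff.2 hX)

lemma colSpan_eq_range_mulVecLin {m n : Type*} [Fintype n] (X : Matrix m n ℝ) :
    colSpan X = LinearMap.range X.mulVecLin :=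
  (range_mulVecLin X).symm

lemma map_mulVecLin_colSpan {m n p : Type*} [Fintype m] [Fintype n] (M : Matrix p m ℝ)
    (X : Matrix m n ℝ) : (colSpan X).map M.mulVecLin = colSpan (M * X) := by
  rw [colSpan_eq_range_mulVecLin, colSpan_eq_range_mulVecLin, mulVecLin_mul,
    LinearMap.range_comp]

namespace IsProjD

variable {J K : ℕ} {D P Q : Matrix (Cell J K) (Cell J K) ℝ} {W V : Submodule ℝ (Cell J K → ℝ)}

lemma sub_mulVec_mem_perpD (hP : IsProjD D W P) (x : Cell J K → ℝ) :
    x - P *ᵥ x ∈ perpD D W :=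
  (hP x).2

lemma mulVec_eq_self_of_mem (hD : D.PosDef) (hP : IsProjD D W P) {x : Cell J K → ℝ}
    (hx : x ∈ W) : P *ᵥ x = x :=
  (sub_eq_zero.1 <| hD.eq_zero_of_dotProduct_mulVec_self <|
    (hP x).2 _ (W.sub_mem hx (hP x).1)).symm

lemma mulVec_eq_zero_of_mem_perpD (hD : D.PosDef) (hP : IsProjD D W P) {x : Cell J K → ℝ}
    (hx : x ∈ perpD D W) : P *ᵥ x = 0 := by
  refine hD.eq_zero_of_dotProduct_mulVec_self ?_
  have h := (hP x).2 _ (hP x).1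
  rwa [sub_dotProduct, hx _ (hP x).1, zero_sub, neg_eq_zero] at h

lemma mem_of_sub_mulVec_eq_zero (hP : IsProjD D W P) {x : Cell J K → ℝ}
    (hx : x - P *ᵥ x = 0) : x ∈ W :=
  sub_eq_zero.1 hx ▸ (hP x).1

lemma unique (hD : D.PosDef) (hP : IsProjD D W P) (hQ : IsProjD D W Q) : P = Q := by
  refine ext_iff_mulVec.2 fun x => sub_eq_zero.1 (hD.eq_zero_of_dotProduct_mulVec_self ?_)
  have hmem : P *ᵥ x - Q *ᵥ x ∈ W := W.sub_mem (hP x).1 (hQ x).1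
  calc (P *ᵥ x - Q *ᵥ x) ⬝ᵥ D *ᵥ (P *ᵥ x - Q *ᵥ x)
      = (x - Q *ᵥ x) ⬝ᵥ D *ᵥ (P *ᵥ x - Q *ᵥ x) - (x - P *ᵥ x) ⬝ᵥ D *ᵥ (P *ᵥ x - Q *ᵥ x) := by
        rw [← sub_dotProduct, sub_sub_sub_cancel_left]
    _ = 0 := by rw [(hQ x).2 _ hmem, (hP x).2 _ hmem, sub_zero]

lemma mul_self (hD : D.PosDef) (hP : IsProjD D W P) : P * P = P :=
  ext_iff_mulVec.2 fun x => by
    rw [← mulVec_mulVec, hP.mulVec_eq_self_of_mem hD (hP x).1]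

lemma one_sub (hD : D.IsSymm) (hP : IsProjD D W P) : IsProjD D (perpD D W) (1 - P) := by
  intro x
  rw [sub_mulVec, one_mulVec, sub_sub_cancel]
  exact ⟨hP.sub_mulVec_mem_perpD x, fun s hs => by
    rw [hD.dotProduct_mulVec_comm]; exact hs _ (hP x).1⟩

lemma transpose_mul (hD : D.IsSymm) (hP : IsProjD D W P) : Pᵀ * D = D * P := by
  have hform : ∀ x y, (P *ᵥ x) ⬝ᵥ D *ᵥ y = (P *ᵥ x) ⬝ᵥ D *ᵥ (P *ᵥ y) := fun x y => by
    have h := hD.dotProduct_mulVec_comm (y - P *ᵥ y) (P *ᵥ x) ▸ (hP y).2 _ (hP x).1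
    rwa [mulVec_sub, dotProduct_sub, sub_eq_zero] at h
  refine ext_iff_mulVec.2 fun y => funext fun i => ?_
  set x : Cell J K → ℝ := Pi.single i 1
  suffices x ⬝ᵥ (Pᵀ * D) *ᵥ y = x ⬝ᵥ (D * P) *ᵥ y by simpa [x, single_dotProduct] using this
  have hx := (hP x).2 _ (hP y).1
  rw [sub_dotProduct, sub_eq_zero] at hx
  rw [← mulVec_mulVec, ← mulVec_mulVec, dotProduct_mulVec, vecMul_transpose, hform, hx]

lemma add_of_inf_perpD (hD : D.IsSymm) (hP : IsProjD D W P) (hQ : IsProjD D (V ⊓ perpD D W) Q) (hWV : W ≤ V) :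
    IsProjD D V (P + Q) := by
  intro x
  have hQx := Submodule.mem_inf.1 (hQ x).1
  refine ⟨add_mulVec P Q x ▸ V.add_mem (hWV (hP x).1) hQx.1, fun s hs => ?_⟩
  have hsW : s - P *ᵥ s ∈ V ⊓ perpD D W :=
    Submodule.mem_inf.2 ⟨V.sub_mem hs (hWV (hP s).1), hP.sub_mulVec_mem_perpD s⟩
  have hW : (x - P *ᵥ x - Q *ᵥ x) ⬝ᵥ D *ᵥ (P *ᵥ s) = 0 := by
    rw [sub_dotProduct, (hP x).2 _ (hP s).1, hQx.2 _ (hP s).1, sub_zero]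
  have hperp : (x - Q *ᵥ x - P *ᵥ x) ⬝ᵥ D *ᵥ (s - P *ᵥ s) = 0 := by
    rw [sub_dotProduct, (hQ x).2 _ hsW, hD.dotProduct_mulVec_comm,
      hP.sub_mulVec_mem_perpD s _ (hP x).1, sub_zero]
  calc (x - (P + Q) *ᵥ x) ⬝ᵥ D *ᵥ s
      = (x - (P + Q) *ᵥ x) ⬝ᵥ D *ᵥ (P *ᵥ s) + (x - (P + Q) *ᵥ x) ⬝ᵥ D *ᵥ (s - P *ᵥ s) := by
        rw [← dotProduct_add, ← mulVec_add, add_sub_cancel]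
    _ = 0 := by
        rw [add_mulVec, sub_add_eq_sub_sub, hW, sub_right_comm, hperp, add_zero]

lemma map_one_sub_self (hD : D.PosDef) (hP : IsProjD D W P) :
    W.map (1 - P).mulVecLin = ⊥ := by
  refine eq_bot_iff.2 ?_
  rintro _ ⟨x, hx, rfl⟩
  rw [Submodule.mem_bot, mulVecLin_apply, sub_mulVec, one_mulVec, hP.mulVec_eq_self_of_mem hD hx,
    sub_self]

lemma map_one_sub_eq_inf_perpD (hD : D.PosDef) (hP : IsProjD D W P) (hWV : W ≤ V) :
    V.map (1 - P).mulVecLin = V ⊓ perpD D W := by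
  apply le_antisymm
  · rintro _ ⟨x, hx, rfl⟩
    rw [mulVecLin_apply, sub_mulVec, one_mulVec]
    exact Submodule.mem_inf.2 ⟨V.sub_mem hx (hWV (hP x).1), hP.sub_mulVec_mem_perpD x⟩
  · intro x hx
    refine ⟨x, (Submodule.mem_inf.1 hx).1, ?_⟩
    rw [mulVecLin_apply, sub_mulVec, one_mulVec,
      hP.mulVec_eq_zero_of_mem_perpD hD (Submodule.mem_inf.1 hx).2, sub_zero]

end IsProjD

lemma isProjD_colSpan {J K : ℕ} {n : Type*} [Fintype n] [DecidableEq n]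
    {D : Matrix (Cell J K) (Cell J K) ℝ} (hD : D.PosDef) (X : Matrix (Cell J K) n ℝ)
    (hX : LinearIndependent ℝ X.col) :
    IsProjD D (colSpan X) (X * (Xᵀ * D * X)⁻¹ * Xᵀ * D) := by
  set G := Xᵀ * D * X
  have hG : IsUnit G.det := (isUnit_iff_isUnit_det G).1 (hD.transpose_mul_mul_same hX).isUnit
  have hDs : Dᵀ = D := (isHermitian_iff_isSymm.1 hD.isHermitian).eq
  have hnormal : Xᵀ * D * (X * G⁻¹ * Xᵀ * D) = Xᵀ * D := by
    calc Xᵀ * D * (X * G⁻¹ * Xᵀ * D) = G * (G⁻¹ * (Xᵀ * D)) := by simp only [G, Matrix.mul_assoc]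
      _ = Xᵀ * D := mul_nonsing_inv_cancel_left _ _ hG
  intro x
  rw [colSpan_eq_range_mulVecLin]
  refine ⟨⟨(G⁻¹ * Xᵀ * D) *ᵥ x, by simp only [mulVecLin_apply, mulVec_mulVec, Matrix.mul_assoc]⟩,
    ?_⟩
  rintro _ ⟨a, rfl⟩
  rw [mulVecLin_apply, mulVec_mulVec, dotProduct_mulVec, ← mulVec_transpose, transpose_mul, hDs,
    mulVec_sub, mulVec_mulVec, hnormal, sub_self, zero_dotProduct]

section ContingencyTable

variable {J K : ℕ}

lemma eCol_apply (k : Fin (K + 1)) (c : Cell J K) : eCol k c = if c.2 = k then 1 else 0 := by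
  obtain ⟨j', k'⟩ := c
  by_cases h : k' = k <;> simp [eCol, eV, Finset.sum_apply, Pi.single_apply, Prod.ext_iff, h]

lemma eAll_eq_sum_eCol : eAll J K = ∑ k : Fin (K + 1), eCol k := by
  rw [eAll, Finset.sum_comm]
  rfl

lemma eAll_mem_rowSpace : eAll J K ∈ rowSpace J K :=
  Submodule.sum_mem _ fun j _ => Submodule.subset_span ⟨j, rfl⟩

lemma apply_eq_of_mem_rowSpace {r : Cell J K → ℝ} (hr : r ∈ rowSpace J K) (j : Fin (J + 1))
    (k k' : Fin (K + 1)) : r (j, k) = r (j, k') := by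
  induction hr using Submodule.span_induction with
  | mem x hx =>
    obtain ⟨j₀, rfl⟩ := hx
    by_cases h : j = j₀ <;> simp [eRow, eV, Finset.sum_apply, Pi.single_apply, Prod.ext_iff, h]
  | zero => rfl
  | add x y _ _ hx hy => simp [hx, hy]
  | smul c x _ hx => simp [hx]

lemma margSpace_eq_rowSpace_sup_colSpan_Emat :
    margSpace J K = rowSpace J K ⊔ colSpan (Emat J K) := by
  have hE : ∀ k : Fin K, eCol k.succ ∈ colSpan (Emat J K) :=
    fun k => Submodule.subset_span ⟨k, rfl⟩
  refine le_antisymm (sup_le le_sup_left ?_) (sup_le_sup_left ?_ _)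
  · rw [colSpace, Submodule.span_le]
    rintro _ ⟨k, rfl⟩
    induction k using Fin.cases with
    | zero =>
      have h0 : eCol 0 = eAll J K - ∑ k : Fin K, eCol k.succ := by
        rw [eAll_eq_sum_eCol, Fin.sum_univ_succ, add_sub_cancel_right]
      rw [SetLike.mem_coe, h0]
      exact Submodule.sub_mem _ (Submodule.mem_sup_left eAll_mem_rowSpace)
        (Submodule.sum_mem _ fun k _ => Submodule.mem_sup_right (hE k))
    | succ k => exact Submodule.mem_sup_right (hE k)
  · rw [colSpan, Submodule.span_le]
    rintro _ ⟨k, rfl⟩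
    exact Submodule.subset_span ⟨k.succ, rfl⟩

lemma eq_zero_of_Emat_mulVec_mem_rowSpace {a : Fin K → ℝ} (ha : Emat J K *ᵥ a ∈ rowSpace J K) :
    a = 0 := by
  have hne : ∀ i : Fin K, (0 : Fin (K + 1)) ≠ i.succ := fun i => (Fin.succ_ne_zero i).symm
  funext k
  simpa [mulVec, dotProduct, Emat, eCol_apply, hne, Fin.succ_inj] using
    apply_eq_of_mem_rowSpace ha 0 k.succ 0

variable {D P : Matrix (Cell J K) (Cell J K) ℝ}

lemma linearIndependent_col_one_sub_mul_Emat (hP : IsProjD D (rowSpace J K) P) :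
    LinearIndependent ℝ ((1 - P) * Emat J K).col := by
  rw [← mulVec_injective_iff, ← coe_mulVecLin, injective_iff_map_eq_zero]
  intro a ha
  rw [mulVecLin_apply, ← mulVec_mulVec, sub_mulVec, one_mulVec] at ha
  exact eq_zero_of_Emat_mulVec_mem_rowSpace (hP.mem_of_sub_mulVec_eq_zero ha)

lemma colSpan_one_sub_mul_Emat (hD : D.PosDef) (hP : IsProjD D (rowSpace J K) P) :
    colSpan ((1 - P) * Emat J K) = margSpace J K ⊓ perpD D (rowSpace J K) := by
  rw [← map_mulVecLin_colSpan, ← hP.map_one_sub_eq_inf_perpD (V := margSpace J K) hD le_sup_left,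
    margSpace_eq_rowSpace_sup_colSpan_Emat, Submodule.map_sup, hP.map_one_sub_self hD, bot_sup_eq]

end ContingencyTable

theorem projection_decomposition_marginal_space_general
    {J K : ℕ}
    (μ : Cell J K → ℝ) (hμ : ∀ i, 0 < μ i)
    (PR : Matrix (Cell J K) (Cell J K) ℝ)
    (hPR : IsProjD (Matrix.diagonal μ) (rowSpace J K) PR)
    (PRperp : Matrix (Cell J K) (Cell J K) ℝ)
    (hPRperp : IsProjD (Matrix.diagonal μ) (perpD (Matrix.diagonal μ) (rowSpace J K)) PRperp)
    (PT : Matrix (Cell J K) (Cell J K) ℝ)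
    (hPT : IsProjD (Matrix.diagonal μ) (margSpace J K) PT)
    (PC'' : Matrix (Cell J K) (Cell J K) ℝ)
    (hPC'' : IsProjD (Matrix.diagonal μ)
      (margSpace J K ⊓ perpD (Matrix.diagonal μ) (rowSpace J K)) PC'')
    (S : Matrix (Cell J K) (Cell J K) ℝ)
    (hS : S = Matrix.diagonal μ * (1 - PR)) :
    LinearIndependent ℝ (fun k : Fin K => fun i => (PRperp * Emat J K) i k) ∧
    Submodule.span ℝ (Set.range fun k : Fin K => fun i => (PRperp * Emat J K) i k) =
      margSpace J K ⊓ perpD (Matrix.diagonal μ) (rowSpace J K) ∧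
    PT = PR + PC'' ∧
    IsUnit ((Emat J K)ᵀ * S * Emat J K) ∧
    Matrix.diagonal μ * PC'' =
      S * Emat J K * ((Emat J K)ᵀ * S * Emat J K)⁻¹ * (Emat J K)ᵀ * S := by
  have hD : (diagonal μ).PosDef := .diagonal hμ
  have hDs : (diagonal μ).IsSymm := isSymm_diagonal μ
  have hPRperp' : IsProjD (diagonal μ) (perpD (diagonal μ) (rowSpace J K)) (1 - PR) :=
    hPR.one_sub hDs
  obtain rfl : PRperp = 1 - PR := hPRperp.unique hD hPRperp'
  subst hS
  set D := diagonal μ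
  set E := Emat J K
  set F := (1 - PR) * E
  have hF : LinearIndependent ℝ F.col := linearIndependent_col_one_sub_mul_Emat hPR
  have hspan : colSpan F = margSpace J K ⊓ perpD D (rowSpace J K) := colSpan_one_sub_mul_Emat hD hPR
  have hPC : PC'' = F * (Fᵀ * D * F)⁻¹ * Fᵀ * D :=
    hPC''.unique hD (hspan ▸ isProjD_colSpan hD F hF)
  have hFD : Fᵀ * D = Eᵀ * (D * (1 - PR)) := by
    rw [transpose_mul, Matrix.mul_assoc, hPRperp'.transpose_mul hDs]
  have hGram : Fᵀ * D * F = Eᵀ * (D * (1 - PR)) * E := by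
    rw [hFD]
    simp only [F, Matrix.mul_assoc, ← Matrix.mul_assoc (1 - PR) (1 - PR), hPRperp'.mul_self hD]
  refine ⟨hF, hspan, hPT.unique hD (hPR.add_of_inf_perpD hDs hPC'' le_sup_left), ?_, ?_⟩
  · rw [← hGram]
    exact (hD.transpose_mul_mul_same hF).isUnit
  · calc D * PC'' = D * F * (Fᵀ * D * F)⁻¹ * (Fᵀ * D) := by
          rw [hPC]; simp only [Matrix.mul_assoc]
      _ = _ := by rw [hGram, hFD]; simp only [F, Matrix.mul_assoc]

/-- with `𝒞'' = 𝒯 ∩ ℛ^{⊥_D}` and `S = D(I − P^D_ℛ)`, the columns of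
`P^D_{ℛ^{⊥_D}}E` form a basis of `𝒞''`, the projections decompose as
`P^D_𝒯 = P^D_ℛ + P^D_{𝒞''}`, `EᵀSE` is invertible, and
`D P^D_{𝒞''} = SE(EᵀSE)⁻¹EᵀS`. -/
theorem projection_decomposition_marginal_space
    {J K : ℕ} (hJ : 1 ≤ J) (hK : 1 ≤ K)
    (μ : Cell J K → ℝ) (hμ : ∀ i, 0 < μ i)
    (PR : Matrix (Cell J K) (Cell J K) ℝ)
    (hPR : IsProjD (Matrix.diagonal μ) (rowSpace J K) PR)
    (PRperp : Matrix (Cell J K) (Cell J K) ℝ)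
    (hPRperp : IsProjD (Matrix.diagonal μ) (perpD (Matrix.diagonal μ) (rowSpace J K)) PRperp)
    (PT : Matrix (Cell J K) (Cell J K) ℝ)
    (hPT : IsProjD (Matrix.diagonal μ) (margSpace J K) PT)
    (PC'' : Matrix (Cell J K) (Cell J K) ℝ)
    (hPC'' : IsProjD (Matrix.diagonal μ)
      (margSpace J K ⊓ perpD (Matrix.diagonal μ) (rowSpace J K)) PC'')
    (S : Matrix (Cell J K) (Cell J K) ℝ)
    (hS : S = Matrix.diagonal μ * (1 - PR)) :
    LinearIndependent ℝ (fun k : Fin K => fun i => (PRperp * Emat J K) i k) ∧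
    Submodule.span ℝ (Set.range fun k : Fin K => fun i => (PRperp * Emat J K) i k) =
      margSpace J K ⊓ perpD (Matrix.diagonal μ) (rowSpace J K) ∧
    PT = PR + PC'' ∧
    IsUnit ((Emat J K)ᵀ * S * Emat J K) ∧
    Matrix.diagonal μ * PC'' =
      S * Emat J K * ((Emat J K)ᵀ * S * Emat J K)⁻¹ * (Emat J K)ᵀ * S :=
  projection_decomposition_marginal_space_general μ hμ PR hPR PRperp hPRperp PT hPT PC'' hPC'' S hS
end

section
/- Let n ≥ 1, let W be a symmetric positive definite n×n real matrix, write ‖x‖_W = √(xᵀWx), let σ > 0, and let β ∈ ℝⁿ satisfy ‖β‖_W < σ. Set θ = (σ² − ‖β‖²_W)⁻¹ β. Then ‖θ‖_W = f(‖β‖_W) where f(u) = u/(σ² − u²), and the regression parameter is recovered from the odds-ratio parameter by β = (σ² − g(‖θ‖_W)²) θ, where g(0) = 0 and g(v) = (√(1 + 4v²σ²) − 1)/(2v) for v > 0 is the inverse of f on [0,σ). -/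
open Matrix

lemma ginv_aux (σ : ℝ) (hσ : 0 < σ) (g : ℝ → ℝ) (hg0 : g 0 = 0)
    (hg : ∀ v : ℝ, 0 < v → g v = (Real.sqrt (1 + 4 * v ^ 2 * σ ^ 2) - 1) / (2 * v))
    (u : ℝ) (hu0 : 0 ≤ u) (huσ : u < σ) :
    g (u / (σ ^ 2 - u ^ 2)) = u := by
  have hden : 0 < σ ^ 2 - u ^ 2 := by nlinarith
  rcases eq_or_lt_of_le hu0 with h0 | h0
  · simp [← h0, hg0]
  · have hv : 0 < u / (σ ^ 2 - u ^ 2) := div_pos h0 hden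
    rw [hg _ hv]
    have hsq : 1 + 4 * (u / (σ ^ 2 - u ^ 2)) ^ 2 * σ ^ 2
        = ((σ ^ 2 + u ^ 2) / (σ ^ 2 - u ^ 2)) ^ 2 := by
      field_simp
      ring
    rw [hsq, Real.sqrt_sq (by positivity)]
    field_simp
    ring

/-- for a symmetric positive definite `W`, `‖x‖_W = √(xᵀWx)`, `σ > 0`
and `β` with `‖β‖_W < σ`, the odds-ratio parameter `θ = (σ² − ‖β‖²_W)⁻¹ β` satisfies
`‖θ‖_W = f(‖β‖_W)` with `f(u) = u/(σ² − u²)`, and the regression parameter is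
recovered as `β = (σ² − g(‖θ‖_W)²) θ`, where `g(0) = 0`,
`g(v) = (√(1 + 4v²σ²) − 1)/(2v)` for `v > 0` is the inverse of `f` on `[0,σ)`. -/
theorem regression_parameter_from_odds_ratio_parameter
    {n : ℕ} (hn : 1 ≤ n) (W : Matrix (Fin n) (Fin n) ℝ) (hW : W.PosDef)
    (nW : (Fin n → ℝ) → ℝ) (hnW : ∀ x, nW x = Real.sqrt (x ⬝ᵥ W.mulVec x))
    (σ : ℝ) (hσ : 0 < σ)
    (f g : ℝ → ℝ) (hf : ∀ u, f u = u / (σ ^ 2 - u ^ 2))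
    (hg0 : g 0 = 0)
    (hg : ∀ v : ℝ, 0 < v → g v = (Real.sqrt (1 + 4 * v ^ 2 * σ ^ 2) - 1) / (2 * v))
    (β : Fin n → ℝ) (hβ : nW β < σ)
    (θ : Fin n → ℝ) (hθ : θ = (σ ^ 2 - (nW β) ^ 2)⁻¹ • β) :
    nW θ = f (nW β) ∧
    (∀ u ∈ Set.Ico 0 σ, g (f u) = u) ∧
    β = (σ ^ 2 - (g (nW θ)) ^ 2) • θ := by
  set u := nW β with hu
  have hu0 : 0 ≤ u := by rw [hu, hnW]; exact Real.sqrt_nonneg _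
  have hden : 0 < σ ^ 2 - u ^ 2 := by nlinarith
  have hc : 0 < (σ ^ 2 - u ^ 2)⁻¹ := inv_pos.mpr hden
  have hqnn : 0 ≤ β ⬝ᵥ W.mulVec β := by
    have := hW.posSemidef.re_dotProduct_nonneg β
    simpa using this
  have hq : β ⬝ᵥ W.mulVec β = u ^ 2 := by
    rw [hu, hnW, Real.sq_sqrt hqnn]
  have h1 : nW θ = f u := by
    rw [hθ, hnW, hf]
    set c := (σ ^ 2 - u ^ 2)⁻¹ with hcdef
    have : (c • β) ⬝ᵥ W.mulVec (c • β) = (c * u) ^ 2 := by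
      rw [Matrix.mulVec_smul, dotProduct_smul, smul_dotProduct, smul_eq_mul,
        smul_eq_mul, hq]
      ring
    rw [this, Real.sqrt_sq (by positivity), div_eq_mul_inv, mul_comm]
  have h2 : ∀ u' ∈ Set.Ico 0 σ, g (f u') = u' := by
    intro u' hu'
    rw [hf]
    exact ginv_aux σ hσ g hg0 hg u' hu'.1 hu'.2
  refine ⟨h1, h2, ?_⟩
  have hgf : g (nW θ) = u := by
    rw [h1]; exact h2 u ⟨hu0, hβ⟩
  rw [hgf, hθ, smul_smul, mul_inv_cancel₀ hden.ne', one_smul]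
end
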